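/- Let 0 < p < 1 be a constant and b = 1/p. There exists a constant α > 0 (depending on p) such that for all sufficiently large n the following holds: for every integer i with 1 ≤ i ≤ ⌈4·ln ln n⌉ and all integers s, j with 0 ≤ s < j ≤ (α·log_b n)/i, one has C(n−s, j−s)·(b·e^i)^{C(s,2)−C(j,2)} ≥ n^{7/8}. -/

import Mathlib

open Filter Real

/-! Write `E = b·eⁱ` and `k = j - s`. Since `C(j,2) - C(s,2) ≤ k·j` and
`C(n-s, k) ≥ ((n-j+1)/k)ᵏ`, the quantity is at least `Bᵏ` with `B = (n-j+1)/(k·Eʲ)`.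
The choice `α = log b / (16 (log b + 1))` forces `j (log b + i) ≤ (log n)/16`, i.e. `Eʲ ≤ n^{1/16}`,
and also `k ≤ j ≤ (log n)/16 ≤ n^{1/16}/16` for large `n`. Hence `B ≥ n^{7/8} ≥ 1`, so `Bᵏ ≥ B`. -/

theorem Nat.div_pow_le_choose {α : Type*} [Semifield α] [LinearOrder α] [IsStrictOrderedRing α]
    (m k : ℕ) : (((m + 1 - k : ℕ) : α) / k) ^ k ≤ m.choose k := by
  refine le_trans ?_ (Nat.pow_le_choose k m)
  rw [div_pow]
  gcongr
  exact_mod_cast Nat.factorial_le_pow k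

theorem Nat.choose_two_le_choose_two_add_sub_mul {s j : ℕ} (h : s ≤ j) :
    j.choose 2 ≤ s.choose 2 + (j - s) * j := by
  induction j, h using Nat.le_induction with
  | base => simp
  | succ j hsj ih =>
    have hstep : (j + 1).choose 2 = j.choose 2 + j := by
      rw [Nat.choose_succ_succ', Nat.choose_one_right, add_comm]
    rw [hstep, Nat.sub_add_comm hsj]
    nlinarith

theorem pow_le_choose_mul_zpow {E : ℝ} (hE : 1 ≤ E) {n s j : ℕ} (hsj : s ≤ j) (hjn : j ≤ n) :
    (((n : ℝ) + 1 - j) / ((j - s : ℕ) * E ^ j)) ^ (j - s) ≤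
      ((n - s).choose (j - s) : ℝ) * E ^ ((s.choose 2 : ℤ) - (j.choose 2 : ℤ)) := by
  have hbase : ((n : ℝ) + 1 - j) = ((n - s + 1 - (j - s) : ℕ) : ℝ) := by
    rw [show n - s + 1 - (j - s) = n + 1 - j by omega]
    push_cast [Nat.cast_sub (by omega : j ≤ n + 1)]
    ring
  have hexp : -(((j - s) * j : ℕ) : ℤ) ≤ (s.choose 2 : ℤ) - (j.choose 2 : ℤ) := by
    have := Nat.choose_two_le_choose_two_add_sub_mul hsj
    omega
  have hzpow : ((E ^ j) ^ (j - s))⁻¹ ≤ E ^ ((s.choose 2 : ℤ) - (j.choose 2 : ℤ)) := by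
    have := zpow_le_zpow_right₀ hE hexp
    rwa [zpow_neg, zpow_natCast, mul_comm, pow_mul] at this
  calc (((n : ℝ) + 1 - j) / ((j - s : ℕ) * E ^ j)) ^ (j - s)
      = ((((n - s + 1 - (j - s) : ℕ) : ℝ) / (j - s : ℕ)) ^ (j - s)) * ((E ^ j) ^ (j - s))⁻¹ := by
        rw [hbase, ← div_div, div_pow, div_eq_mul_inv]
    _ ≤ _ := by
      gcongr
      exact Nat.div_pow_le_choose _ _

theorem le_choose_mul_zpow {E x : ℝ} (hE : 1 ≤ E) (hx : 1 ≤ x) {n s j : ℕ} (hsj : s < j)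
    (hjn : j ≤ n) (h : x * ((j - s : ℕ) * E ^ j) ≤ n + 1 - j) :
    x ≤ ((n - s).choose (j - s) : ℝ) * E ^ ((s.choose 2 : ℤ) - (j.choose 2 : ℤ)) := by
  have hB : x ≤ ((n : ℝ) + 1 - j) / ((j - s : ℕ) * E ^ j) := by
    have : 0 < j - s := by omega
    rwa [le_div_iff₀ (by positivity)]
  calc x ≤ ((n : ℝ) + 1 - j) / ((j - s : ℕ) * E ^ j) := hB
    _ ≤ (((n : ℝ) + 1 - j) / ((j - s : ℕ) * E ^ j)) ^ (j - s) :=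
      le_self_pow₀ (hx.trans hB) (by omega)
    _ ≤ _ := pow_le_choose_mul_zpow hE hsj.le hjn

theorem eventually_log_le_rpow {r : ℝ} (hr : 0 < r) :
    ∀ᶠ n : ℕ in atTop, log n ≤ (n : ℝ) ^ r := by
  have hreal : ∀ᶠ x : ℝ in atTop, log x ≤ x ^ r := by
    filter_upwards [(isLittleO_log_rpow_atTop hr).bound one_pos, eventually_ge_atTop 1]
      with x hx hx1
    simpa [abs_of_nonneg (log_nonneg hx1), abs_of_nonneg (rpow_nonneg (by linarith) r)] using hx
  exact tendsto_natCast_atTop_atTop.eventually hreal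

theorem mul_exp_pow_le_rpow {b t x c : ℝ} (hb : 0 < b) (hx : 0 < x) {j : ℕ}
    (h : j * (log b + t) ≤ log x * c) : (b * exp t) ^ j ≤ x ^ c := by
  rw [rpow_def_of_pos hx, ← exp_log hb, ← exp_add, ← exp_nat_mul]
  exact exp_le_exp.mpr h

theorem mul_add_le_of_le_div {a L c i j : ℝ} (ha : 0 < a) (hc : 0 < c) (hi : 1 ≤ i)
    (hj0 : 0 ≤ j) (hj : j ≤ a / (c * (a + 1)) * (L / a) / i) :
    j * (a + i) ≤ L / c := by
  have hji : j * i ≤ L / (c * (a + 1)) := by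
    calc j * i ≤ a / (c * (a + 1)) * (L / a) := (le_div_iff₀ (by linarith)).mp hj
      _ = L / (c * (a + 1)) := by field_simp
  calc j * (a + i) ≤ j * i * (a + 1) := by
        nlinarith [mul_nonneg (mul_nonneg hj0 ha.le) (sub_nonneg.2 hi)]
    _ ≤ L / (c * (a + 1)) * (a + 1) := by gcongr
    _ = L / c := by field_simp

theorem c_sji_lower_bound (p : ℝ) (hp0 : 0 < p) (hp1 : p < 1) :
    ∃ α : ℝ, 0 < α ∧ ∀ᶠ n : ℕ in atTop,
      ∀ i s j : ℕ, 1 ≤ i → i ≤ ⌈4 * Real.log (Real.log n)⌉₊ → s < j →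
        (j : ℝ) ≤ α * (Real.log n / Real.log (1 / p)) / i →
        (n : ℝ) ^ ((7 : ℝ) / 8) ≤
          ((n - s).choose (j - s) : ℝ) *
            ((1 / p) * Real.exp i) ^ ((s.choose 2 : ℤ) - (j.choose 2 : ℤ)) := by
  have hb : 1 < 1 / p := one_lt_one_div hp0 hp1
  have hlb : 0 < log (1 / p) := log_pos hb
  refine ⟨log (1 / p) / (16 * (log (1 / p) + 1)), by positivity, ?_⟩
  filter_upwards [eventually_log_le_rpow (show (0 : ℝ) < 1 / 16 by norm_num),
    eventually_ge_atTop 1] with n hlog hn i s j hi _ hsj hj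
  have hn1 : (1 : ℝ) ≤ n := by exact_mod_cast hn
  have hi1 : (1 : ℝ) ≤ i := by exact_mod_cast hi
  have hjL : j * (log (1 / p) + i) ≤ log n / 16 :=
    mul_add_le_of_le_div hlb (by norm_num) hi1 j.cast_nonneg hj
  have hEj : (1 / p * exp i) ^ j ≤ (n : ℝ) ^ (1 / 16 : ℝ) :=
    mul_exp_pow_le_rpow (by positivity) (by positivity) (by linarith)
  have hjn : (j : ℝ) ≤ (n : ℝ) ^ (1 / 16 : ℝ) / 16 :=
    calc (j : ℝ) ≤ j * (log (1 / p) + i) := le_mul_of_one_le_right j.cast_nonneg (by linarith)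
      _ ≤ log n / 16 := hjL
      _ ≤ (n : ℝ) ^ (1 / 16 : ℝ) / 16 := by gcongr
  have hsmall : (n : ℝ) ^ (1 / 16 : ℝ) ≤ n := rpow_le_self_of_one_le hn1 (by norm_num)
  have hsplit : (n : ℝ) ^ (7 / 8 : ℝ) * ((n : ℝ) ^ (1 / 16 : ℝ) * (n : ℝ) ^ (1 / 16 : ℝ)) = n := by
    rw [← rpow_add (by positivity), ← rpow_add (by positivity)]
    norm_num
  have hE : 1 ≤ 1 / p * exp i := one_le_mul_of_one_le_of_one_le hb.le (one_le_exp i.cast_nonneg)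
  refine le_choose_mul_zpow hE (one_le_rpow hn1 (by norm_num)) hsj
    (by exact_mod_cast (hjn.trans (by linarith) : (j : ℝ) ≤ n)) ?_
  have hk : ((j - s : ℕ) : ℝ) ≤ j := by exact_mod_cast j.sub_le s
  calc (n : ℝ) ^ (7 / 8 : ℝ) * ((j - s : ℕ) * (1 / p * exp i) ^ j)
      ≤ (n : ℝ) ^ (7 / 8 : ℝ) * ((n : ℝ) ^ (1 / 16 : ℝ) / 16 * (n : ℝ) ^ (1 / 16 : ℝ)) := by
        gcongr
        exact hk.trans hjn
    _ = n / 16 := by linear_combination hsplit / 16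
    _ ≤ n + 1 - j := by linarith
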